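/- Every syntactically closed formula of the extended modal language ML⁺ (with nominals, ◇⁻¹, □⁻¹) is a closed formula: over any descriptive frame, if the propositional variables are interpreted by admissible sets and nominals by singletons, its extension is a closed set. Dually, every syntactically open formula is an open formula (its extension is open). -/

import Mathlib

/-- The diamond set operator: `◇A = {w : ∃v, R w v ∧ v ∈ A}`. -/
def diaOp {W : Type} (R : W → W → Prop) (A : Set W) : Set W := {w | ∃ v, R w v ∧ v ∈ A}

/-- The box set operator: `□A = {w : ∀v, R w v → v ∈ A}`. -/
def boxOp {W : Type} (R : W → W → Prop) (A : Set W) : Set W := {w | ∀ v, R w v → v ∈ A}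

/-- The inverse diamond set operator: `◇⁻¹A = {w : ∃v ∈ A, R v w} = R(A)`. -/
def idiaOp {W : Type} (R : W → W → Prop) (A : Set W) : Set W := {w | ∃ v, R v w ∧ v ∈ A}

/-- The inverse box set operator: `□⁻¹A = {w : ∀v, R v w → v ∈ A}`. -/
def iboxOp {W : Type} (R : W → W → Prop) (A : Set W) : Set W := {w | ∀ v, R v w → v ∈ A}
/-- A general frame: a Kripke frame together with a Boolean algebra of
admissible subsets closed under the diamond operator. -/
structure GenFrame (W : Type) where
  R : W → W → Prop
  adm : Set (Set W)
  univ_mem : Set.univ ∈ adm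
  compl_mem : ∀ X ∈ adm, Xᶜ ∈ adm
  inter_mem : ∀ X ∈ adm, ∀ Y ∈ adm, X ∩ Y ∈ adm
  dia_mem : ∀ X ∈ adm, diaOp R X ∈ adm

/-- The topology generated by the admissible sets as a base of clopen sets. -/
def GenFrame.top {W : Type} (F : GenFrame W) : TopologicalSpace W :=
  TopologicalSpace.generateFrom F.adm

/-- Differentiated: distinct points are separated by admissible sets. -/
def GenFrame.differentiated {W : Type} (F : GenFrame W) : Prop :=
  ∀ x y : W, x ≠ y → ∃ X ∈ F.adm, x ∈ X ∧ y ∉ X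

/-- Tight: `R x y` iff `x ∈ ◇Y` for every admissible `Y` containing `y`. -/
def GenFrame.tight {W : Type} (F : GenFrame W) : Prop :=
  ∀ x y : W, F.R x y ↔ ∀ Y ∈ F.adm, y ∈ Y → x ∈ diaOp F.R Y

/-- Compact: every family of admissible sets with the finite intersection
property has nonempty intersection. -/
def GenFrame.cpt {W : Type} (F : GenFrame W) : Prop :=
  ∀ C : Set (Set W), C ⊆ F.adm →
    (∀ D : Set (Set W), D ⊆ C → D.Finite → (⋂₀ D).Nonempty) →
    (⋂₀ C).Nonempty

/-- A descriptive frame is a differentiated, tight and compact general frame. -/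
def GenFrame.descriptive {W : Type} (F : GenFrame W) : Prop :=
  F.differentiated ∧ F.tight ∧ F.cpt
/-- Formulas of the extended modal language ML⁺, with nominals and the
inverse modalities `◇⁻¹` (`idia`) and `□⁻¹` (`ibox`). -/
inductive MFp : Type where
  | bot
  | top
  | var (p : Nat)
  | nom (k : Nat)
  | neg (φ : MFp)
  | or (φ ψ : MFp)
  | and (φ ψ : MFp)
  | dia (φ : MFp)
  | box (φ : MFp)
  | idia (φ : MFp)
  | ibox (φ : MFp)

def MFp.imp (φ ψ : MFp) : MFp := MFp.or (MFp.neg φ) ψ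

/-- Satisfaction for ML⁺: `V` interprets propositional variables,
`g` assigns a world (i.e. a singleton) to each nominal. -/
def satp {W : Type} (R : W → W → Prop) (V : Nat → Set W) (g : Nat → W) : MFp → W → Prop
  | .bot, _ => False
  | .top, _ => True
  | .var p, w => w ∈ V p
  | .nom k, w => w = g k
  | .neg φ, w => ¬ satp R V g φ w
  | .or φ ψ, w => satp R V g φ w ∨ satp R V g ψ w
  | .and φ ψ, w => satp R V g φ w ∧ satp R V g ψ w
  | .dia φ, w => ∃ v, R w v ∧ satp R V g φ v
  | .box φ, w => ∀ v, R w v → satp R V g φ v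
  | .idia φ, w => ∃ v, R v w ∧ satp R V g φ v
  | .ibox φ, w => ∀ v, R v w → satp R V g φ v
mutual
/-- Syntactically closed: all occurrences of nominals and `◇⁻¹` are positive,
and all occurrences of `□⁻¹` are negative. -/
def synClosed : MFp → Prop
  | .bot => True
  | .top => True
  | .var _ => True
  | .nom _ => True
  | .neg φ => synOpen φ
  | .or φ ψ => synClosed φ ∧ synClosed ψ
  | .and φ ψ => synClosed φ ∧ synClosed ψ
  | .dia φ => synClosed φ
  | .box φ => synClosed φ
  | .idia φ => synClosed φ
  | .ibox _ => False

/-- Syntactically open: all occurrences of nominals and `◇⁻¹` are negative,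
and all occurrences of `□⁻¹` are positive. -/
def synOpen : MFp → Prop
  | .bot => True
  | .top => True
  | .var _ => True
  | .nom _ => False
  | .neg φ => synClosed φ
  | .or φ ψ => synOpen φ ∧ synOpen ψ
  | .and φ ψ => synOpen φ ∧ synOpen ψ
  | .dia φ => synOpen φ
  | .box φ => synOpen φ
  | .idia _ => False
  | .ibox φ => synOpen φ
end

/-!
Admissible sets form a base of clopens for the topology, so variables denote clopen sets, and
differentiation makes singletons closed. By Alexander's subbasis theorem the compactness condition
on admissible sets makes the space compact, and tightness makes `R` a closed subset of `W × W`.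
Hence `◇A` and `◇⁻¹A`, the two projections of `R ∩ (W × A)` and `R ∩ (A × W)`, are closed for
closed `A`, since projections along a compact factor are closed maps; and `◇A` is open for open
`A` because `◇` commutes with unions and maps admissible sets to admissible sets. The boxes are dual to the
diamonds, and an induction on formulas finishes the proof.
-/

open Topology TopologicalSpace

section Operators

variable {W : Type} {R : W → W → Prop}

theorem compl_diaOp_compl (A : Set W) : (diaOp R Aᶜ)ᶜ = boxOp R A := by
  ext w
  simp [diaOp, boxOp]

theorem compl_idiaOp_compl (A : Set W) : (idiaOp R Aᶜ)ᶜ = iboxOp R A := by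
  ext w
  simp [idiaOp, iboxOp]

theorem diaOp_sUnion (S : Set (Set W)) : diaOp R (⋃₀ S) = ⋃ X ∈ S, diaOp R X := by
  ext w
  simp only [diaOp, Set.mem_sUnion, Set.mem_iUnion, exists_prop]
  grind

theorem diaOp_eq_image_fst (A : Set W) :
    diaOp R A = Prod.fst '' ({p : W × W | R p.1 p.2} ∩ Prod.snd ⁻¹' A) := by
  ext w
  simp [diaOp]

theorem idiaOp_eq_image_snd (A : Set W) :
    idiaOp R A = Prod.snd '' ({p : W × W | R p.1 p.2} ∩ Prod.fst ⁻¹' A) := by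
  ext w
  simp [idiaOp]

variable [TopologicalSpace W] [CompactSpace W] {A : Set W}

theorem IsClosed.diaOp (hA : IsClosed A) (hR : IsClosed {p : W × W | R p.1 p.2}) :
    IsClosed (diaOp R A) := by
  rw [diaOp_eq_image_fst]
  exact isClosedMap_fst_of_compactSpace _ (hR.inter (hA.preimage continuous_snd))

theorem IsClosed.idiaOp (hA : IsClosed A) (hR : IsClosed {p : W × W | R p.1 p.2}) :
    IsClosed (idiaOp R A) := by
  rw [idiaOp_eq_image_snd]
  exact isClosedMap_snd_of_compactSpace _ (hR.inter (hA.preimage continuous_fst))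

end Operators

theorem IsOpen.diaOp {W : Type} [TopologicalSpace W] {R : W → W → Prop} {B : Set (Set W)}
    (hB : IsTopologicalBasis B) (hRB : ∀ X ∈ B, IsOpen (diaOp R X)) {A : Set W}
    (hA : IsOpen A) : IsOpen (diaOp R A) := by
  obtain ⟨S, hSB, rfl⟩ := hB.open_eq_sUnion hA
  rw [diaOp_sUnion]
  exact isOpen_biUnion fun X hX => hRB X (hSB hX)

section Semantics

variable {W : Type} [TopologicalSpace W] [T1Space W] {R : W → W → Prop}

theorem isClosed_setOf_satp_and_isOpen_setOf_satp
    (hdiaC : ∀ A : Set W, IsClosed A → IsClosed (diaOp R A))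
    (hdiaO : ∀ A : Set W, IsOpen A → IsOpen (diaOp R A))
    (hidiaC : ∀ A : Set W, IsClosed A → IsClosed (idiaOp R A))
    {V : Nat → Set W} (hV : ∀ q, IsClopen (V q)) (g : Nat → W) (φ : MFp) :
    (synClosed φ → IsClosed {w | satp R V g φ w}) ∧
      (synOpen φ → IsOpen {w | satp R V g φ w}) := by
  induction φ with
  | bot => exact ⟨fun _ => isClosed_empty, fun _ => isOpen_empty⟩
  | top => exact ⟨fun _ => isClosed_univ, fun _ => isOpen_univ⟩
  | var p => exact ⟨fun _ => (hV p).isClosed, fun _ => (hV p).isOpen⟩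
  | nom k => exact ⟨fun _ => isClosed_singleton, False.elim⟩
  | neg φ ih => exact ⟨fun h => (ih.2 h).isClosed_compl, fun h => (ih.1 h).isOpen_compl⟩
  | or φ ψ ihφ ihψ =>
    exact ⟨fun h => (ihφ.1 h.1).union (ihψ.1 h.2), fun h => (ihφ.2 h.1).union (ihψ.2 h.2)⟩
  | and φ ψ ihφ ihψ =>
    exact ⟨fun h => (ihφ.1 h.1).inter (ihψ.1 h.2), fun h => (ihφ.2 h.1).inter (ihψ.2 h.2)⟩
  | dia φ ih => exact ⟨fun h => hdiaC _ (ih.1 h), fun h => hdiaO _ (ih.2 h)⟩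
  | box φ ih =>
    rw [show {w | satp R V g φ.box w} = boxOp R {w | satp R V g φ w} from rfl,
      ← compl_diaOp_compl]
    exact ⟨fun h => (hdiaO _ (ih.1 h).isOpen_compl).isClosed_compl,
      fun h => (hdiaC _ (ih.2 h).isClosed_compl).isOpen_compl⟩
  | idia φ ih => exact ⟨fun h => hidiaC _ (ih.1 h), False.elim⟩
  | ibox φ ih =>
    rw [show {w | satp R V g φ.ibox w} = iboxOp R {w | satp R V g φ w} from rfl,
      ← compl_idiaOp_compl]
    exact ⟨False.elim, fun h => (hidiaC _ (ih.2 h).isClosed_compl).isOpen_compl⟩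

end Semantics

namespace GenFrame

variable {W : Type} (F : GenFrame W)

theorem isTopologicalBasis_adm : @IsTopologicalBasis W F.top F.adm := by
  let := F.top
  refine ⟨fun X hX Y hY x hx => ⟨X ∩ Y, F.inter_mem X hX Y hY, hx, subset_rfl⟩, ?_, rfl⟩
  exact Set.sUnion_eq_univ_iff.2 fun _ => ⟨Set.univ, F.univ_mem, trivial⟩

theorem isClopen_of_mem_adm {X : Set W} (hX : X ∈ F.adm) : @IsClopen W F.top X := by
  let := F.top
  exact ⟨⟨F.isTopologicalBasis_adm.isOpen (F.compl_mem X hX)⟩, F.isTopologicalBasis_adm.isOpen hX⟩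

theorem compactSpace_of_cpt (hc : F.cpt) : @CompactSpace W F.top :=
  compactSpace_generateFrom_of_compl_mem (T := F.top) F.adm rfl F.compl_mem hc

variable [TopologicalSpace W]

theorem t1Space_of_differentiated (hadm : ∀ X ∈ F.adm, IsOpen X) (hd : F.differentiated) :
    T1Space W :=
  t1Space_iff_exists_open.2 fun x y hxy =>
    let ⟨X, hX, hxX, hyX⟩ := hd x y hxy
    ⟨X, hadm X hX, hxX, hyX⟩

theorem isClosed_setOf_R_of_tight (hadm : ∀ X ∈ F.adm, IsClopen X) (ht : F.tight) :
    IsClosed {p : W × W | F.R p.1 p.2} := by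
  rw [← isOpen_compl_iff, isOpen_iff_forall_mem_open]
  rintro ⟨x, y⟩ hxy
  obtain ⟨Y, hY, hyY, hxY⟩ : ∃ Y ∈ F.adm, y ∈ Y ∧ x ∉ diaOp F.R Y := by
    by_contra! h
    exact hxy ((ht x y).2 h)
  refine ⟨(diaOp F.R Y)ᶜ ×ˢ Y, ?_, ?_, hxY, hyY⟩
  · rintro ⟨u, v⟩ ⟨hu, hv⟩ huv
    exact hu ((ht u v).1 huv Y hY hv)
  · exact (hadm _ (F.dia_mem Y hY)).isClosed.isOpen_compl.prod (hadm Y hY).isOpen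

end GenFrame

/-- Every syntactically closed formula of ML⁺ is a closed formula, and every
syntactically open formula is an open formula: over a descriptive frame, with
propositional variables interpreted by admissible sets and nominals by
singletons, the extension is closed (resp. open). -/
theorem synClosed_closed_synOpen_open {W : Type} (F : GenFrame W) (hF : F.descriptive) :
    (∀ φ : MFp, synClosed φ →
      ∀ V : Nat → Set W, (∀ q, V q ∈ F.adm) → ∀ g : Nat → W,
        @IsClosed W F.top {w | satp F.R V g φ w}) ∧
    (∀ φ : MFp, synOpen φ →
      ∀ V : Nat → Set W, (∀ q, V q ∈ F.adm) → ∀ g : Nat → W,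
        @IsOpen W F.top {w | satp F.R V g φ w}) := by
  let := F.top
  obtain ⟨hdiff, htight, hcpt⟩ := hF
  have hadm : ∀ X ∈ F.adm, IsClopen X := fun X => F.isClopen_of_mem_adm
  have := F.compactSpace_of_cpt hcpt
  have := F.t1Space_of_differentiated (fun X hX => (hadm X hX).isOpen) hdiff
  have hR := F.isClosed_setOf_R_of_tight hadm htight
  have key {V : Nat → Set W} (hV : ∀ q, V q ∈ F.adm) (g : Nat → W) (φ : MFp) :=
    isClosed_setOf_satp_and_isOpen_setOf_satp (fun A hA => hA.diaOp hR)
      (fun A => IsOpen.diaOp F.isTopologicalBasis_adm fun X hX => (hadm _ (F.dia_mem X hX)).isOpen)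
      (fun A hA => hA.idiaOp hR) (fun q => hadm _ (hV q)) g φ
  exact ⟨fun φ h V hV g => (key hV g φ).1 h, fun φ h V hV g => (key hV g φ).2 h⟩
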